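/- arXiv:2503.10606 — 3 statements merged into one kernel-verified Lean document; each statement's English description precedes it below -/
import Mathlib

section
/- Let 0 ≤ ξ < 1 and let η equal either 0 or √ξ. Define, for x > 1, I(x) := −2η/(x + η) + 1/(x − 1) + ξ/(x − ξ). Then: (1) x·I'(x) = −I(x) − H(x) where H(x) := 2η²/(x + η)² + 1/(x − 1)² + ξ²/(x − ξ)² > 0; (2) the function x ↦ x·I(x) is strictly decreasing on (1, ∞) with limit 1 + ξ − 2η > 0 as x → ∞, so x·I(x) > 1 + ξ − 2η for all x > 1; (3) I is positive and strictly decreasing on (1, ∞); (4) there is exactly one x_ph ∈ (1, ∞) with I(x_ph) = 2. -/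
/-!
Differentiating termwise gives `x I' = -I - H`, so `(x I)' = I + x I' = -H < 0`: the function
`x I` decreases strictly to its limit `1 + ξ - 2η`, which is positive (for `η = √ξ` it equals
`(1 - √ξ)²`). Hence `I > 0`, and then `I' = -(I + H) / x < 0`. Since `I > 1/(x - 1) - 3` blows up
at `1⁺` while `I → 0` at infinity, the intermediate value theorem and strict monotonicity give
exactly one solution of `I = 2`.
-/

open Real Filter Set Topology

lemma hasDerivAt_div_add (c a x : ℝ) (h : x + a ≠ 0) :
    HasDerivAt (fun y => c / (y + a)) (-(c / (x + a) ^ 2)) x := by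
  refine ((hasDerivAt_const x c).div ((hasDerivAt_id' x).add_const a) h).congr_deriv ?_
  ring

lemma tendsto_mul_div_add_atTop (c a : ℝ) :
    Tendsto (fun x : ℝ => x * (c / (x + a))) atTop (𝓝 c) := by
  have hdiv : Tendsto (fun x : ℝ => c * a / (x + a)) atTop (𝓝 0) :=
    tendsto_const_nhds.div_atTop (tendsto_atTop_add_const_right _ a tendsto_id)
  refine (sub_zero c ▸ tendsto_const_nhds.sub hdiv).congr' ?_
  filter_upwards [eventually_ne_atTop (-a)] with x hx
  have : x + a ≠ 0 := fun h => hx (eq_neg_of_add_eq_zero_left h)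
  field_simp
  ring

lemma StrictAntiOn.lt_of_tendsto_atTop {α β : Type*} [LinearOrder α] [NoMaxOrder α]
    [TopologicalSpace β] [LinearOrder β] [OrderClosedTopology β] {f : α → β} {a x : α} {L : β}
    (hf : StrictAntiOn f (Ioi a)) (hL : Tendsto f atTop (𝓝 L)) (hx : a < x) : L < f x := by
  have : Nonempty α := ⟨a⟩
  obtain ⟨y, hxy⟩ := exists_gt x
  have hy : a < y := hx.trans hxy
  refine lt_of_le_of_lt (le_of_tendsto hL ?_) (hf hx hy hxy)
  filter_upwards [eventually_ge_atTop y] with z hz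
  exact hf.antitoneOn hy (hy.trans_le hz) hz

lemma strictAntiOn_of_hasDerivAt_neg {D : Set ℝ} (hD : Convex ℝ D) (hDo : IsOpen D)
    {f f' : ℝ → ℝ} (hf : ∀ x ∈ D, HasDerivAt f (f' x) x) (hf' : ∀ x ∈ D, f' x < 0) :
    StrictAntiOn f D :=
  strictAntiOn_of_hasDerivWithinAt_neg hD
    (fun x hx => (hf x hx).continuousAt.continuousWithinAt)
    (by rw [hDo.interior_eq]; exact fun x hx => (hf x hx).hasDerivWithinAt)
    (by rwa [hDo.interior_eq])

/-- The index `x χ'(x) / χ(x)` of `χ(x) = (1 + η/x)² (1 - 1/x) (1 - ξ/x)`. -/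
noncomputable def photonI (ξ η x : ℝ) : ℝ :=
  -2 * η / (x + η) + 1 / (x - 1) + ξ / (x - ξ)

noncomputable def photonH (ξ η x : ℝ) : ℝ :=
  2 * η ^ 2 / (x + η) ^ 2 + 1 / (x - 1) ^ 2 + ξ ^ 2 / (x - ξ) ^ 2

section

variable {ξ η x : ℝ}

lemma photonI_eq_sum (ξ η x : ℝ) :
    photonI ξ η x = -2 * η / (x + η) + 1 / (x + -1) + ξ / (x + -ξ) := by
  simp only [photonI, sub_eq_add_neg]

lemma photonH_pos (hx : x ≠ 1) : 0 < photonH ξ η x := by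
  have : x - 1 ≠ 0 := sub_ne_zero.mpr hx
  unfold photonH
  positivity

lemma hasDerivAt_photonI (hx : x ≠ 0) (hη : x + η ≠ 0) (h1 : x - 1 ≠ 0) (hξ : x - ξ ≠ 0) :
    HasDerivAt (photonI ξ η) (-(photonI ξ η x + photonH ξ η x) / x) x := by
  have h1' : x + -1 ≠ 0 := by rwa [← sub_eq_add_neg]
  have hξ' : x + -ξ ≠ 0 := by rwa [← sub_eq_add_neg]
  have hsum := ((hasDerivAt_div_add (-2 * η) η x hη).add
    (hasDerivAt_div_add 1 (-1) x h1')).add (hasDerivAt_div_add ξ (-ξ) x hξ')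
  simp only [← sub_eq_add_neg] at hsum
  refine hsum.congr_deriv ?_
  rw [photonI, photonH]
  field_simp
  ring

lemma hasDerivAt_photonI_of_one_lt (hη : -1 ≤ η) (hξ : ξ ≤ 1) (hx : 1 < x) :
    HasDerivAt (photonI ξ η) (-(photonI ξ η x + photonH ξ η x) / x) x :=
  hasDerivAt_photonI (by positivity) (by linarith : 0 < x + η).ne' (sub_pos.mpr hx).ne'
    (sub_pos.mpr (hξ.trans_lt hx)).ne'

lemma hasDerivAt_mul_photonI (hη : -1 ≤ η) (hξ : ξ ≤ 1) (hx : 1 < x) :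
    HasDerivAt (fun y => y * photonI ξ η y) (-photonH ξ η x) x := by
  refine ((hasDerivAt_id' x).mul (hasDerivAt_photonI_of_one_lt hη hξ hx)).congr_deriv ?_
  field_simp
  ring

lemma strictAntiOn_mul_photonI (hη : -1 ≤ η) (hξ : ξ ≤ 1) :
    StrictAntiOn (fun x => x * photonI ξ η x) (Ioi 1) :=
  strictAntiOn_of_hasDerivAt_neg (convex_Ioi 1) isOpen_Ioi
    (fun _ hx => hasDerivAt_mul_photonI hη hξ hx)
    (fun _ hx => neg_neg_iff_pos.mpr (photonH_pos hx.ne'))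

lemma tendsto_mul_photonI :
    Tendsto (fun x => x * photonI ξ η x) atTop (𝓝 (1 + ξ - 2 * η)) := by
  have hsum := ((tendsto_mul_div_add_atTop (-2 * η) η).add
    (tendsto_mul_div_add_atTop 1 (-1))).add (tendsto_mul_div_add_atTop ξ (-ξ))
  rw [show 1 + ξ - 2 * η = -2 * η + 1 + ξ by ring]
  refine hsum.congr fun x => ?_
  simp only [photonI_eq_sum, mul_add]

lemma tendsto_photonI_atTop : Tendsto (photonI ξ η) atTop (𝓝 0) := by
  have hquot := (tendsto_mul_photonI (ξ := ξ) (η := η)).mul tendsto_inv_atTop_zero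
  rw [mul_zero] at hquot
  refine hquot.congr' ?_
  filter_upwards [eventually_ne_atTop 0] with x hx
  field_simp

lemma lt_mul_photonI (hη : -1 ≤ η) (hξ : ξ ≤ 1) (hx : 1 < x) :
    1 + ξ - 2 * η < x * photonI ξ η x :=
  (strictAntiOn_mul_photonI hη hξ).lt_of_tendsto_atTop tendsto_mul_photonI hx

lemma photonI_pos (hη : -1 ≤ η) (hξ : ξ ≤ 1) (hL : 0 ≤ 1 + ξ - 2 * η) (hx : 1 < x) :
    0 < photonI ξ η x :=
  pos_of_mul_pos_right (hL.trans_lt (lt_mul_photonI hη hξ hx)) (by positivity)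

lemma strictAntiOn_photonI (hη : -1 ≤ η) (hξ : ξ ≤ 1) (hL : 0 ≤ 1 + ξ - 2 * η) :
    StrictAntiOn (photonI ξ η) (Ioi 1) :=
  strictAntiOn_of_hasDerivAt_neg (convex_Ioi 1) isOpen_Ioi
    (fun _ hx => hasDerivAt_photonI_of_one_lt hη hξ hx)
    (fun _ hx => div_neg_of_neg_of_pos
      (neg_neg_iff_pos.mpr (add_pos (photonI_pos hη hξ hL hx) (photonH_pos hx.ne')))
      (zero_lt_one.trans hx))

lemma one_div_sub_one_sub_three_lt_photonI (hη : -1 ≤ η) (hξ : ξ ≤ 1) (hx : 1 < x) :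
    1 / (x - 1) - 3 < photonI ξ η x := by
  have hxη : 0 < x + η := by linarith
  have hxξ : 0 < x - ξ := by linarith
  have hηterm : -2 < -2 * η / (x + η) := by rw [lt_div_iff₀ hxη]; linarith
  have hξterm : -1 < ξ / (x - ξ) := by rw [lt_div_iff₀ hxξ]; linarith
  unfold photonI
  linarith

lemma existsUnique_photonI_eq (hη : -1 ≤ η) (hξ : ξ ≤ 1) (hL : 0 ≤ 1 + ξ - 2 * η)
    {c : ℝ} (hc : 0 < c) : ∃! x, x ∈ Ioi 1 ∧ photonI ξ η x = c := by
  set x₀ := 1 + 1 / (c + 3)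
  have hx₀ : 1 < x₀ := lt_add_of_pos_right 1 (by positivity)
  have hIx₀ : c < photonI ξ η x₀ := by
    have := one_div_sub_one_sub_three_lt_photonI hη hξ hx₀
    simp only [x₀, add_sub_cancel_left, one_div_one_div] at this
    linarith
  obtain ⟨x₁, hIx₁, hx₀x₁⟩ :=
    ((tendsto_photonI_atTop.eventually (gt_mem_nhds hc)).and (eventually_gt_atTop x₀)).exists
  have hcont : ContinuousOn (photonI ξ η) (Icc x₀ x₁) := fun y hy =>
    (hasDerivAt_photonI_of_one_lt hη hξ (hx₀.trans_le hy.1)).continuousAt.continuousWithinAt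
  obtain ⟨x, hx, hIx⟩ := intermediate_value_Icc' hx₀x₁.le hcont ⟨hIx₁.le, hIx₀.le⟩
  have hx1 : x ∈ Ioi 1 := hx₀.trans_le hx.1
  exact ⟨x, ⟨hx1, hIx⟩, fun y ⟨hy1, hIy⟩ =>
    (strictAntiOn_photonI hη hξ hL).injOn hy1 hx1 (hIy.trans hIx.symm)⟩

end

lemma one_add_sub_two_mul_sqrt_pos {ξ : ℝ} (hξ0 : 0 ≤ ξ) (hξ1 : ξ ≠ 1) :
    0 < 1 + ξ - 2 * √ξ := by
  have hsqrt : 1 - √ξ ≠ 0 := sub_ne_zero.mpr fun h => hξ1 (Real.sqrt_eq_one.mp h.symm)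
  calc 0 < (1 - √ξ) ^ 2 := by positivity
    _ = 1 + ξ - 2 * √ξ := by rw [sub_sq, Real.sq_sqrt hξ0]; ring

/-- properties of `I(x) = −2η/(x+η) + 1/(x−1) + ξ/(x−ξ)` for the
Reissner–Nordström (`η = 0`) and loop quantum (`η = √ξ`) black holes, `0 ≤ ξ < 1`:
(1) `x·I'(x) = −I(x) − H(x)` with `H > 0`; (2) `x·I(x)` is strictly decreasing on
`(1,∞)` with limit `1 + ξ − 2η > 0`, hence `x·I(x) > 1 + ξ − 2η`; (3) `I` is positive
and strictly decreasing on `(1,∞)`; (4) there is exactly one `x_ph ∈ (1,∞)` with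
`I(x_ph) = 2`. -/
theorem stmt16
    (ξ η : ℝ) (hξ0 : 0 ≤ ξ) (hξ1 : ξ < 1)
    (hη : η = 0 ∨ η = Real.sqrt ξ)
    (I H : ℝ → ℝ)
    (hI : ∀ x, I x = -2 * η / (x + η) + 1 / (x - 1) + ξ / (x - ξ))
    (hH : ∀ x, H x = 2 * η ^ 2 / (x + η) ^ 2 + 1 / (x - 1) ^ 2 + ξ ^ 2 / (x - ξ) ^ 2) :
    (∀ x, 1 < x → x * deriv I x = -I x - H x ∧ 0 < H x) ∧
    StrictAntiOn (fun x => x * I x) (Set.Ioi 1) ∧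
    Tendsto (fun x => x * I x) atTop (𝓝 (1 + ξ - 2 * η)) ∧
    0 < 1 + ξ - 2 * η ∧
    (∀ x, 1 < x → 1 + ξ - 2 * η < x * I x) ∧
    (∀ x, 1 < x → 0 < I x) ∧
    StrictAntiOn I (Set.Ioi 1) ∧
    (∃! x, x ∈ Set.Ioi (1 : ℝ) ∧ I x = 2) := by
  obtain rfl : I = photonI ξ η := funext hI
  obtain rfl : H = photonH ξ η := funext hH
  obtain ⟨hη1, hL⟩ : -1 ≤ η ∧ 0 < 1 + ξ - 2 * η := by
    rcases hη with rfl | rfl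
    · constructor <;> linarith
    · exact ⟨by linarith [Real.sqrt_nonneg ξ], one_add_sub_two_mul_sqrt_pos hξ0 hξ1.ne⟩
  refine ⟨fun x hx => ⟨?_, photonH_pos hx.ne'⟩, strictAntiOn_mul_photonI hη1 hξ1.le,
    tendsto_mul_photonI, hL, fun x hx => lt_mul_photonI hη1 hξ1.le hx,
    fun x hx => photonI_pos hη1 hξ1.le hL.le hx, strictAntiOn_photonI hη1 hξ1.le hL.le,
    existsUnique_photonI_eq hη1 hξ1.le hL.le two_pos⟩
  rw [(hasDerivAt_photonI_of_one_lt hη1 hξ1.le hx).deriv,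
    mul_div_cancel₀ _ (zero_lt_one.trans hx).ne', neg_add, sub_eq_add_neg]
end

section
/- Let 0 ≤ ξ < 1 and let η equal either 0 or √ξ. Then for all x > 1, J(x) := −2η³/(x + η)³ + 1/(x − 1)³ + ξ³/(x − ξ)³ > 0. Moreover, with H(x) := 2η²/(x + η)² + 1/(x − 1)² + ξ²/(x − ξ)², one has the identity −x·H'(x) = 2H(x) + 2J(x) for all x > 1. -/
open Real Filter Set Topology

/-- for `0 ≤ ξ < 1` and `η ∈ {0, √ξ}`, the function
`J(x) = −2η³/(x+η)³ + 1/(x−1)³ + ξ³/(x−ξ)³` is positive for `x > 1`, and with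
`H(x) = 2η²/(x+η)² + 1/(x−1)² + ξ²/(x−ξ)²` one has `−x·H'(x) = 2H(x) + 2J(x)`. -/
theorem stmt17
    (ξ η : ℝ) (hξ0 : 0 ≤ ξ) (hξ1 : ξ < 1)
    (hη : η = 0 ∨ η = Real.sqrt ξ)
    (H J : ℝ → ℝ)
    (hH : ∀ x, H x = 2 * η ^ 2 / (x + η) ^ 2 + 1 / (x - 1) ^ 2 + ξ ^ 2 / (x - ξ) ^ 2)
    (hJ : ∀ x, J x = -2 * η ^ 3 / (x + η) ^ 3 + 1 / (x - 1) ^ 3 + ξ ^ 3 / (x - ξ) ^ 3) :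
    (∀ x, 1 < x → 0 < J x) ∧
    (∀ x, 1 < x → -(x * deriv H x) = 2 * H x + 2 * J x) := by
  have hη0 : 0 ≤ η := by
    rcases hη with h | h
    · rw [h]
    · rw [h]; exact Real.sqrt_nonneg ξ
  have hη2 : η ^ 2 ≤ ξ := by
    rcases hη with h | h
    · rw [h]; simpa using hξ0
    · rw [h, Real.sq_sqrt hξ0]
  constructor
  · intro x hx
    have hx1 : (0:ℝ) < x - 1 := by linarith
    have hxξ : (0:ℝ) < x - ξ := by linarith
    have hxη : (0:ℝ) < x + η := by linarith
    rw [hJ]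
    have e1 : 1 / (x + η) ^ 3 < 1 / (x - 1) ^ 3 := by
      apply one_div_lt_one_div_of_lt (by positivity)
      have : x - 1 < x + η := by linarith
      exact pow_lt_pow_left₀ this hx1.le (by norm_num)
    have e2 : ξ ^ 3 / (x + η) ^ 3 ≤ ξ ^ 3 / (x - ξ) ^ 3 := by
      apply div_le_div_of_nonneg_left (by positivity) (by positivity)
      have : x - ξ ≤ x + η := by linarith
      exact pow_le_pow_left₀ hxξ.le this 3
    have h6 : η ^ 6 ≤ ξ ^ 3 := by
      calc η ^ 6 = (η ^ 2) ^ 3 := by ring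
        _ ≤ ξ ^ 3 := pow_le_pow_left₀ (sq_nonneg η) hη2 3
    have h3 : 2 * η ^ 3 ≤ 1 + ξ ^ 3 := by nlinarith [sq_nonneg (1 - η ^ 3)]
    have e3 : (0:ℝ) ≤ (1 + ξ ^ 3 - 2 * η ^ 3) / (x + η) ^ 3 :=
      div_nonneg (by linarith) (by positivity)
    have ering : (1 + ξ ^ 3 - 2 * η ^ 3) / (x + η) ^ 3
        = 1 / (x + η) ^ 3 + ξ ^ 3 / (x + η) ^ 3 + -2 * η ^ 3 / (x + η) ^ 3 := by
      ring
    rw [ering] at e3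
    linarith
  · intro x hx
    have hx1 : (x - 1) ≠ 0 := by nlinarith
    have hxξ : (x - ξ) ≠ 0 := by nlinarith
    have hxη : (x + η) ≠ 0 := by nlinarith
    have hHfun : H = fun y => 2 * η ^ 2 / (y + η) ^ 2 + 1 / (y - 1) ^ 2 + ξ ^ 2 / (y - ξ) ^ 2 :=
      funext hH
    have d1 : HasDerivAt (fun y : ℝ => (y + η) ^ 2) (2 * (x + η) ^ 1 * 1) x :=
      ((hasDerivAt_id x).add_const η).pow 2
    have d2 : HasDerivAt (fun y : ℝ => (y - 1) ^ 2) (2 * (x - 1) ^ 1 * 1) x :=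
      ((hasDerivAt_id x).sub_const 1).pow 2
    have d3 : HasDerivAt (fun y : ℝ => (y - ξ) ^ 2) (2 * (x - ξ) ^ 1 * 1) x :=
      ((hasDerivAt_id x).sub_const ξ).pow 2
    have t1 := (hasDerivAt_const x (2 * η ^ 2)).div d1 (pow_ne_zero 2 hxη)
    have t2 := (hasDerivAt_const x (1:ℝ)).div d2 (pow_ne_zero 2 hx1)
    have t3 := (hasDerivAt_const x (ξ ^ 2)).div d3 (pow_ne_zero 2 hxξ)
    have dH : HasDerivAt H
        ((0 * (x + η) ^ 2 - 2 * η ^ 2 * (2 * (x + η) ^ 1 * 1)) / ((x + η) ^ 2) ^ 2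
          + (0 * (x - 1) ^ 2 - 1 * (2 * (x - 1) ^ 1 * 1)) / ((x - 1) ^ 2) ^ 2
          + (0 * (x - ξ) ^ 2 - ξ ^ 2 * (2 * (x - ξ) ^ 1 * 1)) / ((x - ξ) ^ 2) ^ 2) x := by
      rw [hHfun]
      exact (t1.add t2).add t3
    have hderiv : deriv H x = -(4 * η ^ 2) / (x + η) ^ 3 + -2 / (x - 1) ^ 3 + -(2 * ξ ^ 2) / (x - ξ) ^ 3 := by
      rw [dH.deriv]
      have e1 : (0 * (x + η) ^ 2 - 2 * η ^ 2 * (2 * (x + η) ^ 1 * 1)) / ((x + η) ^ 2) ^ 2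
          = -(4 * η ^ 2) / (x + η) ^ 3 := by
        rw [div_eq_div_iff (by positivity) (pow_ne_zero 3 hxη)]; ring
      have e2 : (0 * (x - 1) ^ 2 - 1 * (2 * (x - 1) ^ 1 * 1)) / ((x - 1) ^ 2) ^ 2
          = -2 / (x - 1) ^ 3 := by
        rw [div_eq_div_iff (by positivity) (pow_ne_zero 3 hx1)]; ring
      have e3 : (0 * (x - ξ) ^ 2 - ξ ^ 2 * (2 * (x - ξ) ^ 1 * 1)) / ((x - ξ) ^ 2) ^ 2
          = -(2 * ξ ^ 2) / (x - ξ) ^ 3 := by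
        rw [div_eq_div_iff (by positivity) (pow_ne_zero 3 hxξ)]; ring
      rw [e1, e2, e3]
    rw [hderiv, hH, hJ]
    field_simp
    ring
end

section
/- Let 0 ≤ ξ < 1 and let η equal either 0 or √ξ. Define, for x > 1, I(x) := −2η/(x + η) + 1/(x − 1) + ξ/(x − ξ), H(x) := 2η²/(x + η)² + 1/(x − 1)² + ξ²/(x − ξ)², and G(x) := I(x)(1 − I(x)) − H(x) (equivalently G = x·I' + I(2 − I)). Then G has exactly one zero x_ISCO in (1, ∞); this zero satisfies x_ISCO ≥ 3; G(x) < 0 for 1 < x < x_ISCO and G(x) > 0 for x > x_ISCO; and G has strictly positive derivative at x_ISCO. In particular, the Reissner–Nordström and loop quantum corrected black hole metrics satisfy the single-MSCO condition (iv), with a unique ISCO located at x_ISCO ≥ 3 (i.e. r_ISCO ≥ 3 r_h). -/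
/-!
Clearing denominators, `G x = w x * φ (x - 1)` with `w > 0` and
`φ y = α y + β + ∑ₖ γₖ / y ^ (k + 1)`, where `α > 0` and every `γₖ ≤ 0`: expanded in powers of
`x - 1`, the numerator of `G` has a single sign change, as in Descartes' rule of signs.
Hence `φ' ≥ α > 0` on `(0, ∞)` and `φ → ∞`, so `φ` has exactly one positive zero, crossed with
positive slope, and `φ 2 ≤ 0` puts it at `x ≥ 3`.
-/

open Filter Set Topology

noncomputable def affineAddInvPow (α β : ℝ) {n : ℕ} (γ : Fin n → ℝ) (y : ℝ) : ℝ :=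
  α * y + β + ∑ k, γ k / y ^ (k.val + 1)

theorem hasDerivAt_affineAddInvPow (α β : ℝ) {n : ℕ} (γ : Fin n → ℝ) {y : ℝ} (hy : y ≠ 0) :
    HasDerivAt (affineAddInvPow α β γ)
      (α - ∑ k, (k.val + 1) * γ k / y ^ (k.val + 2)) y := by
  have hterm (k : Fin n) : HasDerivAt (fun y => γ k / y ^ (k.val + 1))
      (-((k.val + 1) * γ k / y ^ (k.val + 2))) y := by
    refine ((hasDerivAt_const y (γ k)).div (hasDerivAt_pow _ y) (pow_ne_zero _ hy)).congr_deriv ?_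
    simp only [Nat.add_sub_cancel]
    field_simp
    push_cast
    ring
  refine ((((hasDerivAt_id y).const_mul α).add_const β).fun_add
    (HasDerivAt.fun_sum fun k (_ : k ∈ Finset.univ) => hterm k)).congr_deriv ?_
  simp [Finset.sum_neg_distrib, sub_eq_add_neg]

theorem affineAddInvPow_deriv_pos {α : ℝ} {n : ℕ} {γ : Fin n → ℝ} {y : ℝ}
    (hα : 0 < α) (hγ : ∀ k, γ k ≤ 0) (hy : 0 < y) :
    0 < α - ∑ k, (k.val + 1) * γ k / y ^ (k.val + 2) := by
  have : ∑ k, (k.val + 1) * γ k / y ^ (k.val + 2) ≤ 0 :=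
    Finset.sum_nonpos fun k _ =>
      div_nonpos_of_nonpos_of_nonneg (mul_nonpos_of_nonneg_of_nonpos (by positivity) (hγ k))
        (by positivity)
  linarith

theorem tendsto_affineAddInvPow_atTop {α : ℝ} (β : ℝ) {n : ℕ} (γ : Fin n → ℝ) (hα : 0 < α) :
    Tendsto (affineAddInvPow α β γ) atTop atTop := by
  have htail : Tendsto (fun y : ℝ => ∑ k, γ k / y ^ (k.val + 1)) atTop (𝓝 0) := by
    simpa using tendsto_finsetSum Finset.univ fun (k : Fin n) _ =>
      (tendsto_const_nhds (x := γ k)).div_atTop (tendsto_pow_atTop (α := ℝ) (Nat.succ_ne_zero k.val))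
  exact (tendsto_atTop_add_const_right _ β (tendsto_id.const_mul_atTop hα)).atTop_add htail

theorem exists_sign_change_of_hasDerivAt_pos {f f' : ℝ → ℝ} {a p : ℝ} (hap : a < p)
    (hf : ∀ x, a < x → HasDerivAt f (f' x) x) (hf' : ∀ x, a < x → 0 < f' x)
    (hp : f p ≤ 0) (htop : Tendsto f atTop atTop) :
    ∃ x₀, p ≤ x₀ ∧ f x₀ = 0 ∧ (∀ x, a < x → x < x₀ → f x < 0) ∧ ∀ x, x₀ < x → 0 < f x := by
  have hcont : ContinuousOn f (Ioi a) := fun x hx => (hf x hx).continuousAt.continuousWithinAt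
  have hmono : StrictMonoOn f (Ioi a) :=
    strictMonoOn_of_hasDerivWithinAt_pos (convex_Ioi a) hcont
      (fun x hx => (hf x (interior_subset hx)).hasDerivWithinAt)
      (fun x hx => hf' x (interior_subset hx))
  obtain ⟨q, hq, hpq⟩ := ((htop.eventually_gt_atTop 0).and (eventually_ge_atTop p)).exists
  obtain ⟨x₀, ⟨hpx₀, -⟩, hx₀⟩ :=
    intermediate_value_Icc hpq (hcont.mono fun x hx => hap.trans_le hx.1) ⟨hp, hq.le⟩
  have hax₀ : a < x₀ := hap.trans_le hpx₀
  refine ⟨x₀, hpx₀, hx₀, fun x hax hx => hx₀ ▸ hmono hax hax₀ hx, fun x hx => ?_⟩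
  exact hx₀ ▸ hmono hax₀ (hax₀.trans hx) hx

/-- The single-MSCO condition (iv), with the ISCO at `x₀ ≥ 3`. -/
def IsUniqueISCO (G : ℝ → ℝ) (x₀ : ℝ) : Prop :=
  1 < x₀ ∧ G x₀ = 0 ∧ (∀ x, 1 < x → G x = 0 → x = x₀) ∧ 3 ≤ x₀ ∧
    (∀ x, 1 < x → x < x₀ → G x < 0) ∧ (∀ x, x₀ < x → 0 < G x) ∧ 0 < deriv G x₀

theorem exists_isUniqueISCO_of_eq_mul {G w f f' : ℝ → ℝ}
    (hG : ∀ x, 1 < x → G x = w x * f x) (hw : ∀ x, 1 < x → 0 < w x)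
    (hwd : ∀ x, 1 < x → DifferentiableAt ℝ w x)
    (hf : ∀ x, 1 < x → HasDerivAt f (f' x) x) (hf' : ∀ x, 1 < x → 0 < f' x)
    (h3 : f 3 ≤ 0) (htop : Tendsto f atTop atTop) : ∃ x₀, IsUniqueISCO G x₀ := by
  obtain ⟨x₀, h3x₀, hfx₀, hneg, hpos⟩ :=
    exists_sign_change_of_hasDerivAt_pos (by norm_num) hf hf' h3 htop
  have h1x₀ : 1 < x₀ := by linarith
  have hGneg (x : ℝ) (h1 : 1 < x) (hx : x < x₀) : G x < 0 := by
    rw [hG x h1]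
    exact mul_neg_of_pos_of_neg (hw x h1) (hneg x h1 hx)
  have hGpos (x : ℝ) (hx : x₀ < x) : 0 < G x := by
    have h1 : 1 < x := h1x₀.trans hx
    rw [hG x h1]
    exact mul_pos (hw x h1) (hpos x hx)
  have hderiv : HasDerivAt G (deriv w x₀ * f x₀ + w x₀ * f' x₀) x₀ :=
    ((hwd x₀ h1x₀).hasDerivAt.mul (hf x₀ h1x₀)).congr_of_eventuallyEq
      (eventually_of_mem (Ioi_mem_nhds h1x₀) fun x hx => hG x hx)
  refine ⟨x₀, h1x₀, by rw [hG x₀ h1x₀, hfx₀, mul_zero], fun x h1 hx => ?_, h3x₀, hGneg, hGpos, ?_⟩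
  · by_contra hne
    rcases lt_or_gt_of_ne hne with h | h
    exacts [(hGneg x h1 h).ne hx, (hGpos x h).ne' hx]
  · rw [hderiv.deriv, hfx₀, mul_zero, zero_add]
    exact mul_pos (hw x₀ h1x₀) (hf' x₀ h1x₀)

theorem exists_isUniqueISCO_of_eq_mul_affineAddInvPow {G w : ℝ → ℝ} {α β : ℝ} {n : ℕ}
    {γ : Fin n → ℝ} (hG : ∀ x, 1 < x → G x = w x * affineAddInvPow α β γ (x - 1))
    (hw : ∀ x, 1 < x → 0 < w x) (hwd : ∀ x, 1 < x → DifferentiableAt ℝ w x)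
    (hα : 0 < α) (hγ : ∀ k, γ k ≤ 0) (h2 : affineAddInvPow α β γ 2 ≤ 0) :
    ∃ x₀, IsUniqueISCO G x₀ :=
  exists_isUniqueISCO_of_eq_mul hG hw hwd
    (fun x hx => (hasDerivAt_affineAddInvPow α β γ (sub_pos.2 hx).ne').comp_sub_const x 1)
    (fun x hx => affineAddInvPow_deriv_pos hα hγ (sub_pos.2 hx)) (by norm_num [h2])
    ((tendsto_affineAddInvPow_atTop β γ hα).comp (tendsto_atTop_add_const_right _ (-1) tendsto_id))

noncomputable def mscoI (η ξ x : ℝ) : ℝ := -2 * η / (x + η) + 1 / (x - 1) + ξ / (x - ξ)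

noncomputable def mscoH (η ξ x : ℝ) : ℝ :=
  2 * η ^ 2 / (x + η) ^ 2 + 1 / (x - 1) ^ 2 + ξ ^ 2 / (x - ξ) ^ 2

noncomputable def mscoG (η ξ x : ℝ) : ℝ := mscoI η ξ x * (1 - mscoI η ξ x) - mscoH η ξ x

theorem mscoG_zero_eq {ξ x : ℝ} (hξ : ξ < 1) (hx : 1 < x) :
    mscoG 0 ξ x = 1 / (x - ξ) ^ 2 *
      affineAddInvPow (1 + ξ) (-3 * ξ * (1 + ξ)) ![-3 * (1 - ξ ^ 2), -2 * (1 - ξ) ^ 2] (x - 1) := by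
  have hx1 : x - 1 ≠ 0 := by linarith
  have hxξ : x - ξ ≠ 0 := by linarith
  simp only [mscoG, mscoI, mscoH, affineAddInvPow, Fin.sum_univ_succ, Fin.sum_univ_zero,
    Matrix.cons_val_zero, Matrix.cons_val_succ, Fin.val_zero, Fin.val_succ]
  field_simp
  ring

theorem mscoG_sq_eq {η x : ℝ} (hη : 0 ≤ η) (hη1 : η ^ 2 < 1) (hx : 1 < x) :
    mscoG η (η ^ 2) x = (x - 1) ^ 2 / ((x + η) ^ 2 * (x - η ^ 2) ^ 2) *
      affineAddInvPow ((1 - η) ^ 2) (2 - 9 * η ^ 2 + 10 * η ^ 3 - 3 * η ^ 4)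
        ![-2 * (1 - η) ^ 2 * (1 + η) * (6 * η ^ 2 - 3 * η + 1),
          -(8 - 4 * η - η ^ 2 + 14 * η ^ 3 - 10 * η ^ 4 + 2 * η ^ 5 + 15 * η ^ 6),
          -(1 - η ^ 2) * (7 * η ^ 4 + 6 * η ^ 3 - 2 * η ^ 2 + 6 * η + 7),
          -2 * (1 - η) ^ 2 * (1 + η) ^ 4] (x - 1) := by
  have hx1 : x - 1 ≠ 0 := by linarith
  have hxη : x + η ≠ 0 := by linarith
  have hxξ : x - η ^ 2 ≠ 0 := by linarith
  simp only [mscoG, mscoI, mscoH, affineAddInvPow, Fin.sum_univ_succ, Fin.sum_univ_zero,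
    Matrix.cons_val_zero, Matrix.cons_val_succ, Fin.val_zero, Fin.val_succ]
  field_simp
  ring

theorem exists_isUniqueISCO_mscoG_zero {ξ : ℝ} (hξ0 : -1 < ξ) (hξ1 : ξ < 1) :
    ∃ x₀, IsUniqueISCO (mscoG 0 ξ) x₀ := by
  have hγ₀ : -3 * (1 - ξ ^ 2) ≤ 0 := by nlinarith
  have hγ₁ : -2 * (1 - ξ) ^ 2 ≤ 0 := by nlinarith [sq_nonneg (1 - ξ)]
  refine exists_isUniqueISCO_of_eq_mul_affineAddInvPow (fun x hx => mscoG_zero_eq hξ1 hx)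
    (fun x hx => one_div_pos.2 (pow_pos (sub_pos.2 (hξ1.trans hx)) 2))
    (fun x hx => (differentiableAt_const _).div (by fun_prop) (pow_ne_zero _ (by linarith)))
    (by linarith) (fun k => by fin_cases k <;> assumption) ?_
  simp only [affineAddInvPow, Fin.sum_univ_succ, Fin.sum_univ_zero, Matrix.cons_val_zero,
    Matrix.cons_val_succ, Fin.val_zero, Fin.val_succ]
  nlinarith [sq_nonneg ξ]

theorem exists_isUniqueISCO_mscoG_sq {η : ℝ} (hη0 : 0 ≤ η) (hη1 : η < 1) :
    ∃ x₀, IsUniqueISCO (mscoG η (η ^ 2)) x₀ := by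
  have hη2 : η ^ 2 < 1 := by nlinarith
  have h1η : 0 ≤ 1 - η := by linarith
  have hγ₀ : -2 * (1 - η) ^ 2 * (1 + η) * (6 * η ^ 2 - 3 * η + 1) ≤ 0 := by
    have h₁ : 0 ≤ (1 - η) ^ 2 * (1 + η) := mul_nonneg (sq_nonneg _) (by linarith)
    have h₂ : 0 < 6 * η ^ 2 - 3 * η + 1 := by nlinarith [sq_nonneg (η - 1 / 4)]
    nlinarith [mul_nonneg h₁ h₂.le]
  have hγ₁ : -(8 - 4 * η - η ^ 2 + 14 * η ^ 3 - 10 * η ^ 4 + 2 * η ^ 5 + 15 * η ^ 6) ≤ 0 := by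
    nlinarith [mul_nonneg hη0 h1η, mul_nonneg (pow_nonneg hη0 3) h1η, pow_nonneg hη0 5,
      pow_nonneg hη0 6]
  have hγ₂ : -(1 - η ^ 2) * (7 * η ^ 4 + 6 * η ^ 3 - 2 * η ^ 2 + 6 * η + 7) ≤ 0 := by
    have : 0 < 7 * η ^ 4 + 6 * η ^ 3 - 2 * η ^ 2 + 6 * η + 7 := by nlinarith [pow_nonneg hη0 3]
    nlinarith
  have hγ₃ : -2 * (1 - η) ^ 2 * (1 + η) ^ 4 ≤ 0 := by
    have : 0 ≤ (1 - η) ^ 2 * (1 + η) ^ 4 := by positivity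
    linarith
  have hφ₂ : 0 ≤ 9 - 6 * η - 5 * η ^ 2 + 4 * η ^ 3 + 2 * η ^ 4 := by
    nlinarith [mul_nonneg hη0 h1η, mul_nonneg (mul_nonneg hη0 hη0) h1η]
  refine exists_isUniqueISCO_of_eq_mul_affineAddInvPow (fun x hx => mscoG_sq_eq hη0 hη2 hx)
    (fun x hx => div_pos (pow_pos (sub_pos.2 hx) 2)
      (mul_pos (pow_pos (by linarith) 2) (pow_pos (by linarith) 2)))
    (fun x hx => DifferentiableAt.div (by fun_prop) (by fun_prop)
      (mul_ne_zero (pow_ne_zero _ (by linarith)) (pow_ne_zero _ (by linarith))))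
    (by nlinarith) (fun k => by fin_cases k <;> assumption) ?_
  simp only [affineAddInvPow, Fin.sum_univ_succ, Fin.sum_univ_zero, Matrix.cons_val_zero,
    Matrix.cons_val_succ, Fin.val_zero, Fin.val_succ]
  -- `φ 2 = -(3/2) η² (9 - 6η - 5η² + 4η³ + 2η⁴)`
  nlinarith [mul_nonneg (sq_nonneg η) hφ₂]

/-- for `0 ≤ ξ < 1` and `η ∈ {0, √ξ}`, the function
`G(x) = I(x)(1 − I(x)) − H(x)` has exactly one zero `x_ISCO` in `(1,∞)`, which
satisfies `x_ISCO ≥ 3`; moreover `G < 0` on `(1, x_ISCO)`, `G > 0` on `(x_ISCO,∞)`, and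
`G` has strictly positive derivative at `x_ISCO`.  In particular the RN and LQBH
metrics satisfy the single-MSCO condition, with a unique ISCO at `r_ISCO ≥ 3 r_h`. -/
theorem stmt18
    (ξ η : ℝ) (hξ0 : 0 ≤ ξ) (hξ1 : ξ < 1)
    (hη : η = 0 ∨ η = Real.sqrt ξ)
    (I H G : ℝ → ℝ)
    (hI : ∀ x, I x = -2 * η / (x + η) + 1 / (x - 1) + ξ / (x - ξ))
    (hH : ∀ x, H x = 2 * η ^ 2 / (x + η) ^ 2 + 1 / (x - 1) ^ 2 + ξ ^ 2 / (x - ξ) ^ 2)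
    (hG : ∀ x, G x = I x * (1 - I x) - H x) :
    ∃ x_ISCO : ℝ, 1 < x_ISCO ∧ G x_ISCO = 0 ∧
      (∀ x, 1 < x → G x = 0 → x = x_ISCO) ∧
      3 ≤ x_ISCO ∧
      (∀ x, 1 < x → x < x_ISCO → G x < 0) ∧
      (∀ x, x_ISCO < x → 0 < G x) ∧
      0 < deriv G x_ISCO := by
  obtain rfl : G = mscoG η ξ := funext fun x => by rw [hG, hI, hH]; rfl
  rcases hη with rfl | rfl
  · exact exists_isUniqueISCO_mscoG_zero (by linarith) hξ1
  · have h := exists_isUniqueISCO_mscoG_sq (Real.sqrt_nonneg ξ)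
      ((Real.sqrt_lt' one_pos).2 (by rwa [one_pow]))
    rwa [Real.sq_sqrt hξ0] at h
end
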